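/- Let G=(Σ,R,T) be a prefix-free context-free game and E a set of effect triples such that for each non-trivial t ∈ E there exists a t-inducing strategy automaton. Then there is a regular one-pass strategy σ_A for G (given by a strategy automaton A) such that W_{N_E}(ρ) ≤_sl W_G(σ_A) for every strategy ρ for the online word problem OnlineNFA(N_E). -/

import Mathlib

namespace CFG

/-- Juliet's two kinds of moves. -/
inductive JMove : Type
  | call : JMove
  | read : JMove
deriving DecidableEq

/-- The extended alphabet Σ̂: `Sum.inl a` is the plain symbol `a`,
`Sum.inr a` is the "called" copy `â`. -/
abbrev HSym (A : Type) : Type := A ⊕ A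

/-- The homomorphism ♮ deleting called symbols. -/
def flat {A : Type} (α : List (HSym A)) : List A :=
  α.filterMap (fun x => match x with | Sum.inl a => some a | Sum.inr _ => none)

/-- A context-free game: a (minimal) DFA `T` over `A` with finite state set `Q`,
and a replacement relation `R` with nonempty replacement words and regular
replacement languages. -/
structure CFGame (A : Type) where
  Q : Type
  fintypeQ : Fintype Q
  T : DFA A Q
  minimal_reachable : ∀ q : Q, ∃ w : List A, T.evalFrom T.start w = q
  minimal_distinguishable :
    ∀ q q' : Q, (∀ w : List A, T.evalFrom q w ∈ T.accept ↔ T.evalFrom q' w ∈ T.accept) → q = q'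
  R : A → List A → Prop
  R_ne : ∀ a v, R a v → v ≠ []
  R_regular : ∀ a, Language.IsRegular {v : List A | R a v}

variable {A : Type}

/-- `a` is a function symbol (its replacement language is nonempty). -/
def CFGame.Fn (G : CFGame A) (a : A) : Prop := ∃ v, G.R a v

/-- One-pass strategies of Juliet (values at non-function symbols are irrelevant). -/
abbrev JStrat (A : Type) : Type := List (HSym A) → A → JMove

/-- Strategies of Romeo (values at non-function symbols are irrelevant). -/
abbrev RStrat (A : Type) : Type := List (HSym A) → A → List A

/-- Validity of a Romeo strategy: replacement words belong to the replacement language. -/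
def CFGame.RValid (G : CFGame A) (τ : RStrat A) : Prop :=
  ∀ (α : List (HSym A)) (a : A), G.Fn a → G.R a (τ α a)

/-- Configurations, instrumented for depth bookkeeping: a history string, the
remaining string where every symbol is annotated with its call-nesting level,
and the maximal nesting depth of the `Call` moves played so far. -/
abbrev Config (A : Type) : Type := List (HSym A) × List (A × ℕ) × ℕ

/-- One step of a play: Juliet reads or calls the current symbol according to `σ`
(a call is only possible at a function symbol); a call is answered by `τ`. -/
noncomputable def CFGame.step (G : CFGame A) (σ : JStrat A) (τ : RStrat A) :
    Config A → Config A :=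
  fun c =>
    match c with
    | (α, [], d) => (α, [], d)
    | (α, (a, k) :: v, d) =>
      letI := Classical.propDecidable (G.Fn a ∧ σ α a = JMove.call)
      if G.Fn a ∧ σ α a = JMove.call then
        (α ++ [Sum.inr a], (τ α a).map (fun b => (b, k + 1)) ++ v, max d (k + 1))
      else (α ++ [Sum.inl a], v, d)

/-- The play of `σ` against `τ` on input word `w`, as the sequence of its
configurations (the configuration stays fixed once the remaining string is empty). -/
noncomputable def CFGame.play (G : CFGame A) (σ : JStrat A) (τ : RStrat A)
    (w : List A) (n : ℕ) : Config A :=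
  (G.step σ τ)^[n] ([], w.map (fun a => (a, 0)), 0)

/-- `σ` wins on `w`: against every (valid) Romeo strategy, the play on `w` is
finite and its final string belongs to the target language. -/
def CFGame.WinsOn (G : CFGame A) (σ : JStrat A) (w : List A) : Prop :=
  ∀ τ : RStrat A, G.RValid τ →
    ∃ n : ℕ, (G.play σ τ w n).2.1 = [] ∧
      G.T.evalFrom G.T.start (flat (G.play σ τ w n).1) ∈ G.T.accept

/-- The winning set `W(σ)`. -/
def CFGame.W (G : CFGame A) (σ : JStrat A) : Set (List A) := {w | G.WinsOn σ w}

/-- `σ` is terminating: every play of `σ` is finite. -/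
def CFGame.Terminating (G : CFGame A) (σ : JStrat A) : Prop :=
  ∀ τ : RStrat A, G.RValid τ → ∀ w : List A, ∃ n : ℕ, (G.play σ τ w n).2.1 = []

/-- `σ` is dominant: it dominates every one-pass strategy. -/
def CFGame.Dominant (G : CFGame A) (σ : JStrat A) : Prop :=
  ∀ σ' : JStrat A, G.W σ' ⊆ G.W σ

/-- `σ` is undominated: no one-pass strategy strictly dominates it. -/
def CFGame.Undominated (G : CFGame A) (σ : JStrat A) : Prop :=
  ¬ ∃ σ' : JStrat A, G.W σ ⊂ G.W σ'

/-- `σ` is forgetful: its decisions only depend on `♮α` and the current symbol. -/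
def CFGame.Forgetful (G : CFGame A) (σ : JStrat A) : Prop :=
  ∀ (α β : List (HSym A)) (a : A), G.Fn a → flat α = flat β → σ α a = σ β a

/-- `σ` is regular: the language `{αa : σ(α,a) = Call}` over Σ̂ is regular. -/
def CFGame.RegularStrat (G : CFGame A) (σ : JStrat A) : Prop :=
  Language.IsRegular
    {x : List (HSym A) | ∃ (α : List (HSym A)) (a : A),
      G.Fn a ∧ σ α a = JMove.call ∧ x = α ++ [Sum.inl a]}

/-- One step of a strategy automaton of a strongly regular strategy, on the state
set `Q ∪ {Call}` (`none` is the absorbing state `Call`). -/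
def optStep {Q : Type} (δA : Q → A → Option Q) (o : Option Q) (a : A) : Option Q :=
  o.bind (fun q => δA q a)

/-- `σ` is strongly regular: given by an automaton obtained from `T` by rerouting
some transitions to a new accepting state `Call`; Juliet plays `Call` on `(α,a)`
iff the automaton maps `♮α·a` to `Call`. -/
def CFGame.StronglyRegular (G : CFGame A) (σ : JStrat A) : Prop :=
  ∃ δA : G.Q → A → Option G.Q,
    (∀ q a, δA q a = some (G.T.step q a) ∨ δA q a = none) ∧
    ∀ (α : List (HSym A)) (a : A), G.Fn a →
      (σ α a = JMove.call ↔
        List.foldl (optStep δA) (some G.T.start) (flat α ++ [a]) = none)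

/-- Shortlex (strict) order on words. -/
def shortLex [LinearOrder A] (v w : List A) : Prop :=
  v.length < w.length ∨ (v.length = w.length ∧ List.Lex (· < ·) v w)

/-- `V <_sl W` for sets of words: the shortlex-least word of the symmetric
difference belongs to `W`. -/
def slLT [LinearOrder A] (V W : Set (List A)) : Prop :=
  ∃ w : List A, w ∈ W ∧ w ∉ V ∧ ∀ v : List A, shortLex v w → (v ∈ V ↔ v ∈ W)

/-- `V ≤_sl W` for sets of words. -/
def slLE [LinearOrder A] (V W : Set (List A)) : Prop := V = W ∨ slLT V W

/-- `σ` is weakly dominant: `W(σ') ≤_sl W(σ)` for every one-pass strategy `σ'`. -/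
def CFGame.WeaklyDominant [LinearOrder A] (G : CFGame A) (σ : JStrat A) : Prop :=
  ∀ σ' : JStrat A, slLE (G.W σ') (G.W σ)

/-- The bounded depth property. -/
def CFGame.BoundedDepthProperty (G : CFGame A) : Prop :=
  ∃ B : ℕ → ℕ, ∀ σ : JStrat A, ∀ k : ℕ, ∃ σk : JStrat A,
    ∀ w ∈ G.W σ, w.length ≤ k →
      G.WinsOn σk w ∧
      ∀ τ : RStrat A, G.RValid τ → ∀ n : ℕ, (G.play σk τ w n).2.2 ≤ B w.length

/-- Prefix-freeness of all replacement languages. -/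
def CFGame.PrefixFree (G : CFGame A) : Prop :=
  ∀ (a : A) (u v : List A), G.R a u → G.R a v → u <+: v → u = v

/-- Non-recursiveness: no function symbol can be derived from itself. -/
def CFGame.NonRecursive (G : CFGame A) : Prop :=
  ¬ ∃ (n : ℕ) (f : ℕ → A), 1 ≤ n ∧ f 0 = f n ∧ (∀ i ≤ n, G.Fn (f i)) ∧
    ∀ k < n, ∃ v : List A, G.R (f k) v ∧ f (k + 1) ∈ v

/-- `σ` is almost undominated: only finitely many words are lost by `σ` but won
by some strategy dominating `σ`. -/
def CFGame.AlmostUndominated (G : CFGame A) (σ : JStrat A) : Prop :=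
  Set.Finite {w : List A | ¬ G.WinsOn σ w ∧
    ∃ σ' : JStrat A, G.W σ ⊆ G.W σ' ∧ G.WinsOn σ' w}

/-- Convergence of a sequence of one-pass strategies. -/
def Converges (G : CFGame A) (σs : ℕ → JStrat A) (σ : JStrat A) : Prop :=
  ∀ n : ℕ, ∃ k0 : ℕ, ∀ k ≥ k0, ∀ α : List (HSym A), α.length ≤ n →
    ∀ a : A, G.Fn a → σ α a = σs k α a

/-- The one-pass strategy defined by a DFA `M` over Σ̂ (a strategy automaton):
play `Call` on `(α,a)` iff `M` accepts `α·a`. -/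
noncomputable def autoStrat {S : Type} (M : DFA (HSym A) S) : JStrat A :=
  fun α a =>
    letI := Classical.propDecidable (M.eval (α ++ [Sum.inl a]) ∈ M.accept)
    if M.eval (α ++ [Sum.inl a]) ∈ M.accept then JMove.call else JMove.read

/-- `States(q; w, σ)`: the `T`-states `δ*(q, ♮α)` over final history strings `α`
of plays of `σ` on `w`. -/
def CFGame.StatesOf (G : CFGame A) (σ : JStrat A) (q : G.Q) (w : List A) : Set G.Q :=
  {q' | ∃ τ : RStrat A, G.RValid τ ∧ ∃ n : ℕ,
    (G.play σ τ w n).2.1 = [] ∧ G.T.evalFrom q (flat (G.play σ τ w n).1) = q'}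

/-- `(p, a, S)` is an effect triple of `σ`. -/
def CFGame.IsEffectTriple (G : CFGame A) (σ : JStrat A) (t : G.Q × A × Set G.Q) : Prop :=
  G.StatesOf σ t.1 [t.2.1] ⊆ t.2.2

/-- An effect triple is trivial if `δ(p,a) ∈ S`. -/
def CFGame.TrivialTriple (G : CFGame A) (t : G.Q × A × Set G.Q) : Prop :=
  G.T.step t.1 t.2.1 ∈ t.2.2

/-- The substrategy `σ^α`. -/
def subStrat (σ : JStrat A) (α : List (HSym A)) : JStrat A :=
  fun β a => σ (α ++ β) a

/-- The effect set `E(σ)`: all effect triples of all substrategies of `σ`. -/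
def CFGame.EffectSet (G : CFGame A) (σ : JStrat A) : Set (G.Q × A × Set G.Q) :=
  {t | ∃ α : List (HSym A), G.IsEffectTriple (subStrat σ α) t}

/-- The transition relation of the NFA `N_E` associated with a set `E` of effect
triples (state set `P(Q)`, initial state `{s}`, accepting states the subsets of `F`). -/
def CFGame.NEStep (G : CFGame A) (E : Set (G.Q × A × Set G.Q))
    (S : Set G.Q) (a : A) (S' : Set G.Q) : Prop :=
  ∀ p ∈ S, ∃ S'' : Set G.Q, S'' ⊆ S' ∧ (p, a, S'') ∈ E

/-- A strategy for the online word problem `OnlineNFA(N_E)`. -/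
def CFGame.NEOnlineStrat (G : CFGame A) (E : Set (G.Q × A × Set G.Q))
    (ρ : List A → Set G.Q) : Prop :=
  ρ [] = {G.T.start} ∧ ∀ (w : List A) (a : A), G.NEStep E (ρ w) a (ρ (w ++ [a]))

/-- The winning set of a strategy for `OnlineNFA(N_E)`. -/
def CFGame.NEWins (G : CFGame A) (ρ : List A → Set G.Q) : Set (List A) :=
  {w | ρ w ⊆ G.T.accept}

/-- A strategy automaton `M` is `(p,a,St)`-inducing. -/
def CFGame.Inducing (G : CFGame A) {S : Type} (M : DFA (HSym A) S)
    (p : G.Q) (a : A) (St : Set G.Q) : Prop :=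
  G.Terminating (autoStrat M) ∧ G.Fn a ∧
  (∀ u : List A, G.R a u → G.StatesOf (autoStrat M) p u ⊆ St) ∧
  ∃ QA : G.Q → Set S,
    (∀ q ∈ St, ∀ q' ∈ St, q ≠ q' → Disjoint (QA q) (QA q')) ∧
    ∀ u : List A, G.R a u → ∀ τ : RStrat A, G.RValid τ → ∀ n : ℕ,
      (G.play (autoStrat M) τ u n).2.1 = [] →
      ((∀ q ∈ St,
          (M.eval (G.play (autoStrat M) τ u n).1 ∈ QA q ↔
            G.T.evalFrom p (flat (G.play (autoStrat M) τ u n).1) = q)) ∧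
        ∀ β : List (HSym A), β <+: (G.play (autoStrat M) τ u n).1 →
          β ≠ (G.play (autoStrat M) τ u n).1 → ∀ r ∈ St, M.eval β ∉ QA r)


/-!
The online problem for `N_E` is a game on the finite state set `P(Q)`, so it has a positional
strategy `g` that is weakly dominant for the shortlex order: defining the shortlex supremum of the
winning sets from each state word by word, one checks that following a successor with the largest
supremum realises it. The strategy automaton then simulates `g` alongside the target DFA: on a
symbol `c` read in target state `p`, it reads if some triple `(p, c, S'')` of `E` with
`S'' ⊆ g S c` is trivial, and otherwise calls and runs the inducing automaton of such a triple,
which brings the target DFA into a state of `S''`. Hence the final state of every play on `w`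
lies in `g`'s state after `w`, and every word won by `g` is won by the automaton.
-/

section ShortLex

variable {A : Type}

def shortLexKey (w : List A) : ℕ ×ₗ List A := toLex (w.length, w)

theorem shortLexKey_injective : Function.Injective (shortLexKey (A := A)) :=
  fun _ _ h => congrArg (fun x => (ofLex x).2) h

variable [LinearOrder A]

theorem shortLex_iff_key_lt {v w : List A} : shortLex v w ↔ shortLexKey v < shortLexKey w :=
  (Prod.Lex.toLex_lt_toLex (x := (v.length, v)) (y := (w.length, w))).symm

theorem shortLex_trans {u v w : List A} (h₁ : shortLex u v) (h₂ : shortLex v w) :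
    shortLex u w := by
  rw [shortLex_iff_key_lt] at *
  exact h₁.trans h₂

theorem shortLex_trichotomous (v w : List A) : shortLex v w ∨ v = w ∨ shortLex w v := by
  simp only [shortLex_iff_key_lt, ← shortLexKey_injective.eq_iff]
  exact lt_trichotomy _ _

theorem shortLex_cons (c : A) {v w : List A} (h : shortLex v w) : shortLex (c :: v) (c :: w) := by
  rcases h with h | ⟨hlen, hlex⟩
  · exact Or.inl (by simpa using h)
  · exact Or.inr ⟨by simpa using hlen, List.Lex.cons hlex⟩

theorem not_shortLex_nil (v : List A) : ¬ shortLex v [] := by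
  rintro (h | ⟨-, h⟩)
  · simp at h
  · cases h

theorem length_le_of_shortLex {v w : List A} (h : shortLex v w) : v.length ≤ w.length := by
  rcases h with h | ⟨h, -⟩
  exacts [h.le, h.le]

theorem exists_shortLex_max {D : Set (List A)} (hD : D.Finite) (hne : D.Nonempty) :
    ∃ w ∈ D, ∀ v ∈ D, ¬ shortLex w v := by
  obtain ⟨w, hw, hmax⟩ := Set.exists_max_image D shortLexKey hD hne
  exact ⟨w, hw, fun v hv h => (shortLex_iff_key_lt.mp h).not_ge (hmax v hv)⟩

variable [Finite A]

theorem shortLex_wf : WellFounded (shortLex (A := A)) := by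
  have := (List.Shortlex.wf (wellFounded_lt (α := A)))
  exact this.mono fun v w h => List.shortlex_def.mpr h

theorem finite_setOf_shortLex (w : List A) : {v | shortLex v w}.Finite :=
  (List.finite_length_le A w.length).subset fun _ => length_le_of_shortLex

end ShortLex

section ShortLexOrderOnLanguages

variable {A : Type} [LinearOrder A]

theorem not_slLE_of_witness {V W : Set (List A)} {w : List A} (hV : w ∈ V) (hW : w ∉ W)
    (hagree : ∀ v, shortLex v w → (v ∈ V ↔ v ∈ W)) : ¬ slLE V W := by
  rintro (rfl | ⟨w', hw'W, hw'V, hagree'⟩)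
  · exact hW hV
  rcases shortLex_trichotomous w w' with h | rfl | h
  · exact hW ((hagree' w h).mp hV)
  · exact hw'V hV
  · exact hw'V ((hagree w' h).mpr hw'W)

theorem slLE_trans {U V W : Set (List A)} (h₁ : slLE U V) (h₂ : slLE V W) : slLE U W := by
  rcases h₁ with rfl | ⟨w₁, hw₁V, hw₁U, hagree₁⟩
  · exact h₂
  rcases h₂ with rfl | ⟨w₂, hw₂W, hw₂V, hagree₂⟩
  · exact Or.inr ⟨w₁, hw₁V, hw₁U, hagree₁⟩
  rcases shortLex_trichotomous w₁ w₂ with h | rfl | h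
  · exact Or.inr ⟨w₁, (hagree₂ w₁ h).mp hw₁V, hw₁U,
      fun v hv => (hagree₁ v hv).trans (hagree₂ v (shortLex_trans hv h))⟩
  · exact absurd hw₁V hw₂V
  · exact Or.inr ⟨w₂, hw₂W, fun hU => hw₂V ((hagree₁ w₂ h).mp hU),
      fun v hv => (hagree₁ v (shortLex_trans hv h)).trans (hagree₂ v hv)⟩

variable [Finite A]

theorem exists_least_diff {V W : Set (List A)} (h : V ≠ W) :
    ∃ w, ¬ (w ∈ V ↔ w ∈ W) ∧ ∀ v, shortLex v w → (v ∈ V ↔ v ∈ W) := by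
  have hne : {w | ¬ (w ∈ V ↔ w ∈ W)}.Nonempty := by
    by_contra hempty
    exact h (Set.ext fun w => not_not.mp fun hw => hempty ⟨w, hw⟩)
  obtain ⟨w, hw, hmin⟩ := shortLex_wf.has_min _ hne
  exact ⟨w, hw, fun v hv => not_not.mp fun hdiff => hmin v hdiff hv⟩

theorem slLE_of_least_diff {V W : Set (List A)}
    (h : ∀ w, ¬ (w ∈ V ↔ w ∈ W) → (∀ v, shortLex v w → (v ∈ V ↔ v ∈ W)) → w ∈ W) :
    slLE V W := by
  by_cases hVW : V = W
  · exact Or.inl hVW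
  obtain ⟨w, hdiff, hagree⟩ := exists_least_diff hVW
  have hwW := h w hdiff hagree
  exact Or.inr ⟨w, hwW, fun hwV => hdiff (iff_of_true hwV hwW), hagree⟩

theorem slLE_total (V W : Set (List A)) : slLE V W ∨ slLE W V := by
  by_cases hVW : V = W
  · exact Or.inl (Or.inl hVW)
  obtain ⟨w, hdiff, hagree⟩ := exists_least_diff hVW
  by_cases hwW : w ∈ W
  · exact Or.inl (Or.inr ⟨w, hwW, fun hwV => hdiff (iff_of_true hwV hwW), hagree⟩)
  · exact Or.inr (Or.inr ⟨w, by tauto, hwW, fun v hv => (hagree v hv).symm⟩)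

theorem slLE_of_slLE_of_subset {V V' W : Set (List A)} (h : slLE V V') (hsub : V' ⊆ W) :
    slLE V W := by
  refine slLE_of_least_diff fun w hdiff hagree => by_contra fun hwW => ?_
  have hwV : w ∈ V := by tauto
  rcases h with rfl | ⟨w', hw'V', hw'V, hagree'⟩
  · exact hwW (hsub hwV)
  rcases shortLex_trichotomous w w' with h | rfl | h
  · exact hwW (hsub ((hagree' w h).mp hwV))
  · exact hw'V hwV
  · exact hw'V ((hagree w' h).mpr (hsub hw'V'))

end ShortLexOrderOnLanguages

section ShortLexSupremum

variable {A : Type} [LinearOrder A] [Finite A] {𝓛 : Set (Set (List A))}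

noncomputable def slSup (𝓛 : Set (Set (List A))) : Set (List A) :=
  {w | shortLex_wf.fix (C := fun _ => Prop)
    (fun w ih => ∃ L ∈ 𝓛, (∀ v (h : shortLex v w), v ∈ L ↔ ih v h) ∧ w ∈ L) w}

theorem mem_slSup_iff {w : List A} :
    w ∈ slSup 𝓛 ↔ ∃ L ∈ 𝓛, (∀ v, shortLex v w → (v ∈ L ↔ v ∈ slSup 𝓛)) ∧ w ∈ L :=
  Iff.of_eq (shortLex_wf.fix_eq _ w)

theorem slLE_slSup {L : Set (List A)} (hL : L ∈ 𝓛) : slLE L (slSup 𝓛) :=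
  slLE_of_least_diff fun _ hdiff hagree => by_contra fun hw =>
    hdiff (iff_of_false (fun hwL => hw (mem_slSup_iff.mpr ⟨L, hL, hagree, hwL⟩)) hw)

theorem exists_mem_agree_slSup_of_not_shortLex (hne : 𝓛.Nonempty) (w : List A) :
    ∃ L ∈ 𝓛, ∀ v, ¬ shortLex w v → (v ∈ L ↔ v ∈ slSup 𝓛) := by
  induction w using (shortLex_wf (A := A)).induction with
  | _ w ih =>
  obtain ⟨L₀, hL₀, hagree₀⟩ : ∃ L ∈ 𝓛, ∀ v, shortLex v w → (v ∈ L ↔ v ∈ slSup 𝓛) := by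
    rcases {v | shortLex v w}.eq_empty_or_nonempty with hempty | hbelow
    · obtain ⟨L, hL⟩ := hne
      exact ⟨L, hL, fun v hv => absurd hv (Set.eq_empty_iff_forall_notMem.mp hempty v)⟩
    · obtain ⟨v₀, hv₀, hmax⟩ := exists_shortLex_max (finite_setOf_shortLex w) hbelow
      obtain ⟨L, hL, hagree⟩ := ih v₀ hv₀
      exact ⟨L, hL, fun v hv => hagree v (hmax v hv)⟩
  by_cases hw : w ∈ slSup 𝓛
  · obtain ⟨L, hL, hagree, hwL⟩ := mem_slSup_iff.mp hw
    refine ⟨L, hL, fun v hv => ?_⟩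
    rcases shortLex_trichotomous v w with h | rfl | h
    · exact hagree v h
    · exact iff_of_true hwL hw
    · exact absurd h hv
  · refine ⟨L₀, hL₀, fun v hv => ?_⟩
    rcases shortLex_trichotomous v w with h | rfl | h
    · exact hagree₀ v h
    · exact iff_of_false (fun hvL => hw (mem_slSup_iff.mpr ⟨L₀, hL₀, hagree₀, hvL⟩)) hw
    · exact absurd h hv

theorem exists_mem_agree_slSup_on {D : Set (List A)} (hD : D.Finite) (hne : 𝓛.Nonempty) :
    ∃ L ∈ 𝓛, ∀ v ∈ D, (v ∈ L ↔ v ∈ slSup 𝓛) := by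
  rcases D.eq_empty_or_nonempty with rfl | hDne
  · obtain ⟨L, hL⟩ := hne
    exact ⟨L, hL, by simp⟩
  obtain ⟨w, -, hmax⟩ := exists_shortLex_max hD hDne
  obtain ⟨L, hL, hagree⟩ := exists_mem_agree_slSup_of_not_shortLex hne w
  exact ⟨L, hL, fun v hv => hagree v (hmax v hv)⟩

end ShortLexSupremum

theorem _root_.Set.Finite.exists_forall_rel_of_total {β : Type*} {r : β → β → Prop}
    (htotal : ∀ x y, r x y ∨ r y x) (htrans : ∀ {x y z}, r x y → r y z → r x z)
    {s : Set β} (hs : s.Finite) (hne : s.Nonempty) : ∃ x ∈ s, ∀ y ∈ s, r y x := by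
  have hrefl : ∀ x, r x x := fun x => (htotal x x).elim id id
  induction s, hs using Set.Finite.induction_on with
  | empty => exact absurd hne Set.not_nonempty_empty
  | @insert a s _ _ ih =>
    rcases s.eq_empty_or_nonempty with rfl | hs
    · exact ⟨a, Set.mem_insert a ∅, by simp [hrefl]⟩
    obtain ⟨x, hx, hmax⟩ := ih hs
    rcases htotal a x with h | h
    · exact ⟨x, .inr hx, by rintro y (rfl | hy); exacts [h, hmax y hy]⟩
    · exact ⟨a, .inl rfl, by rintro y (rfl | hy); exacts [hrefl _, htrans (hmax y hy) h]⟩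

section OnlineStrategies

variable {A P : Type} (step : P → A → P → Prop)

def IsOnlineStrat (p : P) (ρ : List A → P) : Prop :=
  ρ [] = p ∧ ∀ (w : List A) (a : A), step (ρ w) a (ρ (w ++ [a]))

def HasOnlineStrat (p : P) : Prop := ∃ ρ : List A → P, IsOnlineStrat step p ρ

def consStrat (p : P) (ρs : A → List A → P) : List A → P
  | [] => p
  | c :: w => ρs c w

variable {step} {p : P} {ρ : List A → P}

theorem IsOnlineStrat.step_nil (hρ : IsOnlineStrat step p ρ) (c : A) : step p c (ρ [c]) := by
  simpa [hρ.1] using hρ.2 [] c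

theorem IsOnlineStrat.tail (hρ : IsOnlineStrat step p ρ) (c : A) :
    IsOnlineStrat step (ρ [c]) (fun w => ρ (c :: w)) :=
  ⟨rfl, fun w a => hρ.2 (c :: w) a⟩

theorem isOnlineStrat_consStrat {q : A → P} (hq : ∀ c, step p c (q c)) {ρs : A → List A → P}
    (hρs : ∀ c, IsOnlineStrat step (q c) (ρs c)) : IsOnlineStrat step p (consStrat p ρs) := by
  refine ⟨rfl, fun w a => ?_⟩
  cases w with
  | nil => simpa [consStrat, (hρs a).1] using hq a
  | cons c w => exact (hρs c).2 w a

variable [LinearOrder A] [Finite A] (step) (F : Set P)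

noncomputable def optimalWins (p : P) : Set (List A) :=
  slSup ((fun ρ => ρ ⁻¹' F) '' {ρ | IsOnlineStrat step p ρ})

theorem slLE_optimalWins (hρ : IsOnlineStrat step p ρ) : slLE (ρ ⁻¹' F) (optimalWins step F p) :=
  slLE_slSup ⟨ρ, hρ, rfl⟩

theorem exists_optimal_succ [Finite P] (hp : HasOnlineStrat step p) (c : A) :
    ∃ q, (step p c q ∧ HasOnlineStrat step q) ∧
      ∀ q', step p c q' → HasOnlineStrat step q' →
        slLE (optimalWins step F q') (optimalWins step F q) := by
  obtain ⟨ρ, hρ⟩ := hp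
  obtain ⟨q, hq, hmax⟩ := Set.Finite.exists_forall_rel_of_total
    (r := fun q q' => slLE (optimalWins step F q) (optimalWins step F q'))
    (fun _ _ => slLE_total _ _) slLE_trans (Set.toFinite {q | step p c q ∧ HasOnlineStrat step q})
    ⟨ρ [c], hρ.step_nil c, _, hρ.tail c⟩
  exact ⟨q, hq, fun q' h₁ h₂ => hmax q' ⟨h₁, h₂⟩⟩

open Classical in
/-- Junk value `p` when there is no online strategy from `p`. -/
noncomputable def optimalSucc [Finite P] (p : P) (c : A) : P :=
  if hp : HasOnlineStrat step p then (exists_optimal_succ step F hp c).choose else p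

variable {step} {F}

theorem optimalSucc_spec [Finite P] (hp : HasOnlineStrat step p) (c : A) :
    (step p c (optimalSucc step F p c) ∧ HasOnlineStrat step (optimalSucc step F p c)) ∧
      ∀ q', step p c q' → HasOnlineStrat step q' →
        slLE (optimalWins step F q') (optimalWins step F (optimalSucc step F p c)) := by
  rw [optimalSucc, dif_pos hp]
  exact (exists_optimal_succ step F hp c).choose_spec

theorem nil_mem_optimalWins_iff (hp : HasOnlineStrat step p) :
    [] ∈ optimalWins step F p ↔ p ∈ F := by
  rw [optimalWins, mem_slSup_iff]
  constructor
  · rintro ⟨-, ⟨ρ, hρ, rfl⟩, -, hnil⟩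
    rwa [Set.mem_preimage, hρ.1] at hnil
  · intro hpF
    obtain ⟨ρ, hρ⟩ := hp
    refine ⟨_, ⟨ρ, hρ, rfl⟩, fun v hv => absurd hv (not_shortLex_nil v), ?_⟩
    rwa [Set.mem_preimage, hρ.1]

variable [Finite P] {c : A} {v : List A}

theorem mem_optimalWins_optimalSucc_of_cons (hp : HasOnlineStrat step p)
    (ih : ∀ x, shortLex x v →
      (c :: x ∈ optimalWins step F p ↔ x ∈ optimalWins step F (optimalSucc step F p c)))
    (h : c :: v ∈ optimalWins step F p) :
    v ∈ optimalWins step F (optimalSucc step F p c) := by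
  obtain ⟨-, ⟨ρ, hρ, rfl⟩, hagree, hcv⟩ := mem_slSup_iff.mp h
  have hle : slLE ((fun w => ρ (c :: w)) ⁻¹' F) (optimalWins step F (optimalSucc step F p c)) :=
    slLE_trans (slLE_optimalWins step F (hρ.tail c))
      ((optimalSucc_spec hp c).2 _ (hρ.step_nil c) ⟨_, hρ.tail c⟩)
  by_contra hv
  exact not_slLE_of_witness (V := (fun w => ρ (c :: w)) ⁻¹' F) hcv hv
    (fun x hx => (hagree _ (shortLex_cons c hx)).trans (ih x hx)) hle

theorem cons_mem_optimalWins_of_optimalSucc (hp : HasOnlineStrat step p)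
    (ih : ∀ c' y, shortLex (c' :: y) (c :: v) →
      (c' :: y ∈ optimalWins step F p ↔ y ∈ optimalWins step F (optimalSucc step F p c')))
    (h : v ∈ optimalWins step F (optimalSucc step F p c)) :
    c :: v ∈ optimalWins step F p := by
  have hρs : ∀ c', ∃ ρ', IsOnlineStrat step (optimalSucc step F p c') ρ' ∧
      ∀ y : List A, y.length ≤ v.length →
        (y ∈ ρ' ⁻¹' F ↔ y ∈ optimalWins step F (optimalSucc step F p c')) := by
    intro c'
    obtain ⟨ρ', hρ'⟩ := (optimalSucc_spec hp c').1.2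
    obtain ⟨-, ⟨ρ', hρ', rfl⟩, hagree⟩ := exists_mem_agree_slSup_on
      (𝓛 := (fun ρ => ρ ⁻¹' F) '' {ρ | IsOnlineStrat step (optimalSucc step F p c') ρ})
      (List.finite_length_le A v.length) ⟨_, ρ', hρ', rfl⟩
    exact ⟨ρ', hρ', fun y hy => hagree y hy⟩
  choose ρs hρs hagree using hρs
  have hρ := isOnlineStrat_consStrat (fun c' => (optimalSucc_spec hp c').1.1) hρs
  refine mem_slSup_iff.mpr ⟨_, ⟨_, hρ, rfl⟩, fun x hx => ?_, (hagree c v le_rfl).mpr h⟩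
  cases x with
  | nil => exact (nil_mem_optimalWins_iff hp).symm
  | cons c' y =>
    have hy : y.length ≤ v.length := by simpa using length_le_of_shortLex hx
    exact (hagree c' y hy).trans (ih c' y hx).symm

theorem cons_mem_optimalWins_iff (hp : HasOnlineStrat step p) :
    c :: v ∈ optimalWins step F p ↔ v ∈ optimalWins step F (optimalSucc step F p c) := by
  suffices ∀ w p, HasOnlineStrat step p → ∀ (c : A) v, w = c :: v →
      (c :: v ∈ optimalWins step F p ↔ v ∈ optimalWins step F (optimalSucc step F p c)) from
    this _ p hp c v rfl
  intro w
  induction w using (shortLex_wf (A := A)).induction with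
  | _ w ih =>
  rintro p hp c v rfl
  exact ⟨mem_optimalWins_optimalSucc_of_cons hp
      fun x hx => ih _ (shortLex_cons c hx) p hp c x rfl,
    cons_mem_optimalWins_of_optimalSucc hp fun c' y hy => ih _ hy p hp c' y rfl⟩

theorem hasOnlineStrat_foldl_optimalSucc (hp : HasOnlineStrat step p) (w : List A) :
    HasOnlineStrat step (w.foldl (optimalSucc step F) p) := by
  induction w generalizing p with
  | nil => exact hp
  | cons c w ih => exact ih (optimalSucc_spec hp c).1.2

theorem isOnlineStrat_foldl_optimalSucc (hp : HasOnlineStrat step p) :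
    IsOnlineStrat step p (fun w => w.foldl (optimalSucc step F) p) := by
  refine ⟨rfl, fun w a => ?_⟩
  simpa using (optimalSucc_spec (hasOnlineStrat_foldl_optimalSucc hp w) a).1.1

theorem optimalWins_eq_preimage_foldl (hp : HasOnlineStrat step p) :
    optimalWins step F p = (fun w => w.foldl (optimalSucc step F) p) ⁻¹' F := by
  ext w
  induction w generalizing p with
  | nil => exact nil_mem_optimalWins_iff hp
  | cons c w ih => exact (cons_mem_optimalWins_iff hp).trans (ih (optimalSucc_spec hp c).1.2)

variable (step F) in
theorem exists_optimal_positional_strat (p : P) :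
    ∃ g : P → A → P, ∀ ρ : List A → P, IsOnlineStrat step p ρ →
      IsOnlineStrat step p (fun w => w.foldl g p) ∧
        slLE (ρ ⁻¹' F) ((fun w => w.foldl g p) ⁻¹' F) := by
  refine ⟨optimalSucc step F, fun ρ hρ => ⟨isOnlineStrat_foldl_optimalSucc ⟨ρ, hρ⟩, ?_⟩⟩
  rw [← optimalWins_eq_preimage_foldl ⟨ρ, hρ⟩]
  exact slLE_optimalWins step F hρ

end OnlineStrategies

section Plays

variable {A : Type} (G : CFGame A) {σ σ₁ σ₂ : JStrat A} {τ : RStrat A}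

def subRStrat (τ : RStrat A) (γ : List (HSym A)) : RStrat A := fun β a => τ (γ ++ β) a

variable {G}

theorem CFGame.RValid.subRStrat (hτ : G.RValid τ) (γ : List (HSym A)) :
    G.RValid (subRStrat τ γ) :=
  fun β a ha => hτ (γ ++ β) a ha

theorem flat_append (α β : List (HSym A)) : flat (α ++ β) = flat α ++ flat β :=
  List.filterMap_append

theorem autoStrat_eq_call_iff {S : Type} {M : DFA (HSym A) S} {α : List (HSym A)} {a : A} :
    autoStrat M α a = JMove.call ↔ M.eval (α ++ [Sum.inl a]) ∈ M.accept := by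
  unfold autoStrat
  split_ifs with h
  exacts [iff_of_true rfl h, iff_of_false (by simp) h]

theorem autoStrat_congr {S₁ S₂ : Type} {M₁ : DFA (HSym A) S₁} {M₂ : DFA (HSym A) S₂}
    {α₁ α₂ : List (HSym A)} {a : A}
    (h : M₁.eval (α₁ ++ [Sum.inl a]) ∈ M₁.accept ↔ M₂.eval (α₂ ++ [Sum.inl a]) ∈ M₂.accept) :
    autoStrat M₁ α₁ a = autoStrat M₂ α₂ a := by
  unfold autoStrat
  split_ifs <;> first | rfl | tauto

theorem step_call {α : List (HSym A)} {a : A} {k d : ℕ} {v : List (A × ℕ)}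
    (h : G.Fn a ∧ σ α a = JMove.call) :
    G.step σ τ (α, (a, k) :: v, d) =
      (α ++ [Sum.inr a], (τ α a).map (fun b => (b, k + 1)) ++ v, max d (k + 1)) := by
  simp only [CFGame.step, if_pos h]

theorem step_read {α : List (HSym A)} {a : A} {k d : ℕ} {v : List (A × ℕ)}
    (h : ¬ (G.Fn a ∧ σ α a = JMove.call)) :
    G.step σ τ (α, (a, k) :: v, d) = (α ++ [Sum.inl a], v, d) := by
  simp only [CFGame.step, if_neg h]

theorem step_eq_self_of_remaining_eq_nil {c : Config A} (hc : c.2.1 = []) : G.step σ τ c = c := by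
  obtain ⟨α, rem, d⟩ := c
  subst hc
  rfl

theorem step_hist_eq_append {c : Config A} (hc : c.2.1 ≠ []) :
    ∃ x, (G.step σ τ c).1 = c.1 ++ [x] := by
  obtain ⟨α, _ | ⟨⟨a, k⟩, v⟩, d⟩ := c
  · exact absurd rfl hc
  by_cases h : G.Fn a ∧ σ α a = JMove.call
  · exact ⟨_, by rw [step_call h]⟩
  · exact ⟨_, by rw [step_read h]⟩

theorem step_congr {c : Config A} (h : c.2.1 ≠ [] → ∀ a, σ₁ c.1 a = σ₂ c.1 a) :
    G.step σ₁ τ c = G.step σ₂ τ c := by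
  obtain ⟨α, _ | ⟨⟨a, k⟩, v⟩, d⟩ := c
  · rfl
  have hσ : σ₁ α a = σ₂ α a := h (List.cons_ne_nil _ _) a
  by_cases hcall : G.Fn a ∧ σ₁ α a = JMove.call
  · rw [step_call hcall, step_call (hσ ▸ hcall)]
  · rw [step_read hcall, step_read (hσ ▸ hcall)]

theorem step_append {c : Config A} (hc : c.2.1 ≠ []) (z : List (A × ℕ)) :
    G.step σ τ (c.1, c.2.1 ++ z, c.2.2) =
      ((G.step σ τ c).1, (G.step σ τ c).2.1 ++ z, (G.step σ τ c).2.2) := by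
  obtain ⟨α, _ | ⟨⟨a, k⟩, v⟩, d⟩ := c
  · exact absurd rfl hc
  by_cases h : G.Fn a ∧ σ α a = JMove.call
  · simp [step_call h]
  · simp [step_read h]

theorem step_shift (γ : List (HSym A)) {c₁ c₂ : Config A} (h₁ : c₁.1 = γ ++ c₂.1)
    (h₂ : c₁.2.1.map Prod.fst = c₂.2.1.map Prod.fst) :
    (G.step σ τ c₁).1 = γ ++ (G.step (subStrat σ γ) (subRStrat τ γ) c₂).1 ∧
      (G.step σ τ c₁).2.1.map Prod.fst =
        (G.step (subStrat σ γ) (subRStrat τ γ) c₂).2.1.map Prod.fst := by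
  obtain ⟨α₁, rem₁, d₁⟩ := c₁
  obtain ⟨α₂, rem₂, d₂⟩ := c₂
  dsimp only at h₁ h₂
  subst h₁
  match rem₁, rem₂, h₂ with
  | [], [], _ => exact ⟨rfl, rfl⟩
  | (a, k₁) :: v₁, (a', k₂) :: v₂, h₂ =>
    simp only [List.map_cons, List.cons.injEq] at h₂
    obtain ⟨rfl, hv⟩ := h₂
    by_cases h : G.Fn a ∧ σ (γ ++ α₂) a = JMove.call
    · rw [step_call h, step_call (σ := subStrat σ γ) h]
      simp [subRStrat, hv, Function.comp_def]
    · rw [step_read h, step_read (σ := subStrat σ γ) h]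
      simp [hv]

theorem play_succ (w : List A) (n : ℕ) :
    G.play σ τ w (n + 1) = G.step σ τ (G.play σ τ w n) :=
  Function.iterate_succ_apply' _ _ _

theorem play_add (w : List A) (n m : ℕ) :
    G.play σ τ w (n + m) = (G.step σ τ)^[m] (G.play σ τ w n) := by
  rw [CFGame.play, add_comm, Function.iterate_add_apply]
  rfl

theorem play_eq_of_le {w : List A} {n m : ℕ} (hfin : (G.play σ τ w n).2.1 = []) (hnm : n ≤ m) :
    G.play σ τ w m = G.play σ τ w n := by
  obtain ⟨k, rfl⟩ := Nat.exists_eq_add_of_le hnm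
  rw [play_add]
  exact Function.iterate_fixed (step_eq_self_of_remaining_eq_nil hfin) k

theorem iterate_step_shift (γ : List (HSym A)) (u : List A) (k d n : ℕ) :
    ((G.step σ τ)^[n] (γ, u.map (·, k), d)).1 =
        γ ++ (G.play (subStrat σ γ) (subRStrat τ γ) u n).1 ∧
      ((G.step σ τ)^[n] (γ, u.map (·, k), d)).2.1.map Prod.fst =
        (G.play (subStrat σ γ) (subRStrat τ γ) u n).2.1.map Prod.fst := by
  induction n with
  | zero => simp [CFGame.play, Function.comp_def]
  | succ n ih =>
    rw [Function.iterate_succ_apply', play_succ]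
    exact step_shift γ ih.1 ih.2

theorem iterate_step_append {c : Config A} (z : List (A × ℕ)) (n : ℕ)
    (hlive : ∀ m < n, ((G.step σ τ)^[m] c).2.1 ≠ []) :
    (G.step σ τ)^[n] (c.1, c.2.1 ++ z, c.2.2) =
      (((G.step σ τ)^[n] c).1, ((G.step σ τ)^[n] c).2.1 ++ z, ((G.step σ τ)^[n] c).2.2) := by
  induction n with
  | zero => rfl
  | succ n ih =>
    rw [Function.iterate_succ_apply', ih fun m hm => hlive m (hm.trans n.lt_succ_self),
      step_append (hlive n n.lt_succ_self), ← Function.iterate_succ_apply' (G.step σ τ)]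

theorem exists_play_append {w : List A} {n : ℕ} (hfin : (G.play σ τ w n).2.1 = [])
    (v : List A) :
    ∃ n₀, G.play σ τ (w ++ v) n₀ =
      ((G.play σ τ w n).1, v.map (·, 0), (G.play σ τ w n).2.2) := by
  classical
  have hex : ∃ n, (G.play σ τ w n).2.1 = [] := ⟨n, hfin⟩
  obtain ⟨n₀, hfin₀, hlive⟩ : ∃ n₀, (G.play σ τ w n₀).2.1 = [] ∧
      ∀ m < n₀, (G.play σ τ w m).2.1 ≠ [] :=
    ⟨Nat.find hex, Nat.find_spec hex, fun m hm => Nat.find_min hex hm⟩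
  have hn₀ : G.play σ τ w n₀ = G.play σ τ w n := by
    rcases le_total n₀ n with h | h
    · exact (play_eq_of_le hfin₀ h).symm
    · exact play_eq_of_le hfin h
  refine ⟨n₀, ?_⟩
  rw [CFGame.play, List.map_append]
  refine (iterate_step_append (c := ([], w.map (·, 0), 0)) (v.map (·, 0)) n₀ hlive).trans ?_
  rw [← hn₀]
  change ((G.play σ τ w n₀).1, (G.play σ τ w n₀).2.1 ++ _, _) = _
  rw [hfin₀]
  rfl

theorem play_congr {u : List A} {n : ℕ}
    (h : ∀ β, β <+: (G.play σ₁ τ u n).1 → β.length < (G.play σ₁ τ u n).1.length →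
      ∀ a, σ₁ β a = σ₂ β a) :
    G.play σ₁ τ u n = G.play σ₂ τ u n := by
  induction n with
  | zero => rfl
  | succ n ih =>
    set c := G.play σ₁ τ u n
    have hext : c.2.1 ≠ [] → c.1 <+: (G.step σ₁ τ c).1 ∧
        c.1.length < (G.step σ₁ τ c).1.length := fun hc => by
      obtain ⟨x, hx⟩ := step_hist_eq_append (σ := σ₁) (τ := τ) hc
      rw [hx]
      exact ⟨List.prefix_append _ _, by simp⟩
    have hpre : c.1 <+: (G.step σ₁ τ c).1 ∧ c.1.length ≤ (G.step σ₁ τ c).1.length := by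
      by_cases hc : c.2.1 = []
      · rw [step_eq_self_of_remaining_eq_nil hc]
        exact ⟨List.prefix_refl _, le_rfl⟩
      · exact ⟨(hext hc).1, (hext hc).2.le⟩
    rw [play_succ] at h ⊢
    rw [play_succ, ← ih fun β hβ hlen => h β (hβ.trans hpre.1) (hlen.trans_le hpre.2)]
    exact step_congr fun hc => h c.1 (hext hc).1 (hext hc).2

end Plays

section InducingAutomata

variable {A : Type} (G : CFGame A)

structure InducingAutomaton (t : G.Q × A × Set G.Q) where
  State : Type
  fintype : Fintype State
  M : DFA (HSym A) State
  inducing : G.Inducing M t.1 t.2.1 t.2.2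

variable {G} {t : G.Q × A × Set G.Q} (I : InducingAutomaton G t)

noncomputable def InducingAutomaton.exitSet : G.Q → Set I.State :=
  I.inducing.2.2.2.choose

/-- `m ∈ Q_{A,q}` in the paper's notation: the replacement word has been played out and the
target DFA, started in `t.1`, is now in `q`. -/
def InducingAutomaton.ExitsTo (m : I.State) (q : G.Q) : Prop := q ∈ t.2.2 ∧ m ∈ I.exitSet q

def InducingAutomaton.IsExit (m : I.State) : Prop := ∃ q, I.ExitsTo m q

theorem InducingAutomaton.ExitsTo.unique {I : InducingAutomaton G t} {m : I.State} {q q' : G.Q}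
    (h : I.ExitsTo m q) (h' : I.ExitsTo m q') : q = q' :=
  by_contra fun hne =>
    Set.disjoint_left.mp (I.inducing.2.2.2.choose_spec.1 q h.1 q' h'.1 hne) h.2 h'.2

theorem InducingAutomaton.exists_play {u : List A} (hu : G.R t.2.1 u) {τ : RStrat A}
    (hτ : G.RValid τ) :
    ∃ n, (G.play (autoStrat I.M) τ u n).2.1 = [] ∧
      I.ExitsTo (I.M.eval (G.play (autoStrat I.M) τ u n).1)
        (G.T.evalFrom t.1 (flat (G.play (autoStrat I.M) τ u n).1)) ∧
      ∀ η, η <+: (G.play (autoStrat I.M) τ u n).1 →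
        η.length < (G.play (autoStrat I.M) τ u n).1.length → ¬ I.IsExit (I.M.eval η) := by
  obtain ⟨hterm, -, hstates, -⟩ := I.inducing
  obtain ⟨n, hfin⟩ := hterm τ hτ u
  obtain ⟨hexit, hnoexit⟩ := I.inducing.2.2.2.choose_spec.2 u hu τ hτ n hfin
  have hq : G.T.evalFrom t.1 (flat (G.play (autoStrat I.M) τ u n).1) ∈ t.2.2 :=
    hstates u hu ⟨τ, hτ, n, hfin, rfl⟩
  refine ⟨n, hfin, ⟨hq, (hexit _ hq).mpr rfl⟩, ?_⟩
  rintro η hpre hlen ⟨q, hqS, hm⟩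
  exact hnoexit η hpre (by rintro rfl; exact lt_irrefl _ hlen) q hqS hm

end InducingAutomata

section StrategyAutomaton

variable {A : Type} (G : CFGame A) (E : Set (G.Q × A × Set G.Q))

abbrev NontrivialTriple : Type := {t : G.Q × A × Set G.Q // t ∈ E ∧ ¬ G.TrivialTriple t}

variable {G} (g : Set G.Q → A → Set G.Q)
  (I : ∀ t : NontrivialTriple G E, InducingAutomaton G t.1)

open Classical in
/-- Which triple of `E` to play at target state `p` on the symbol `c` while the online strategy
moves from `S` to `g S c`: `none` means that reading `c` is safe. -/
noncomputable def chosenTriple (S : Set G.Q) (p : G.Q) (c : A) : Option (NontrivialTriple G E) :=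
  if htriv : ∃ S' ⊆ g S c, (p, c, S') ∈ E ∧ G.T.step p c ∈ S' then none
  else if h : ∃ S' ⊆ g S c, (p, c, S') ∈ E then
    some ⟨(p, c, h.choose), h.choose_spec.2,
      fun hmem => htriv ⟨h.choose, h.choose_spec.1, h.choose_spec.2, hmem⟩⟩
  else none

variable {E g} {S : Set G.Q} {p : G.Q} {c : A}

theorem step_mem_of_chosenTriple_eq_none (hstep : G.NEStep E S c (g S c)) (hp : p ∈ S)
    (h : chosenTriple E g S p c = none) : G.T.step p c ∈ g S c := by
  unfold chosenTriple at h
  split_ifs at h with htriv hex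
  · obtain ⟨S', hS', -, hmem⟩ := htriv
    exact hS' hmem
  · obtain ⟨S', hS', hE⟩ := hstep p hp
    exact absurd ⟨S', hS', hE⟩ hex

theorem eq_of_chosenTriple_eq_some {t : NontrivialTriple G E}
    (h : chosenTriple E g S p c = some t) :
    t.1.1 = p ∧ t.1.2.1 = c ∧ t.1.2.2 ⊆ g S c := by
  unfold chosenTriple at h
  split_ifs at h with htriv hex
  obtain rfl := Option.some.inj h
  exact ⟨rfl, rfl, hex.choose_spec.1⟩

/-- States of the strategy automaton: `outer S p` tracks the state `S` of the online strategy
and the target DFA state `p`; `inner t S m` runs the `t`-inducing automaton inside a call;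
`call` only serves to accept. -/
inductive StratState : Type
  | outer (S : Set G.Q) (p : G.Q)
  | inner (t : NontrivialTriple G E) (S : Set G.Q) (m : (I t).State)
  | call

variable (g)

noncomputable def outerStep (S : Set G.Q) (p : G.Q) : HSym A → StratState I
  | .inl c => if chosenTriple E g S p c = none then .outer (g S c) (G.T.step p c) else .call
  | .inr c =>
    match chosenTriple E g S p c with
    | none => .outer (g S c) (G.T.step p c) -- unreachable: `c` is only called if a triple is chosen
    | some t => .inner t (g S c) (I t).M.start

open Classical in
noncomputable def stratAutomaton : DFA (HSym A) (StratState I) where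
  step
    | .outer S p, x => outerStep g I S p x
    | .inner t S m, x =>
      if h : (I t).IsExit m then outerStep g I S h.choose x
      else .inner t S ((I t).M.step m x)
    | .call, _ => .call
  start := .outer {G.T.start} G.T.start
  accept := {X | match X with
    | .outer _ _ => False
    | .inner t _ m => m ∈ (I t).M.accept
    | .call => True}

variable {g I}

/-- The automaton state `X` behaves like `outer S p`. -/
def StratState.Settled : StratState I → Set G.Q → G.Q → Prop
  | .outer S p, S', p' => S = S' ∧ p = p'
  | .inner t S m, S', p' => S = S' ∧ (I t).ExitsTo m p'
  | .call, _, _ => False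

open Classical in
theorem StratState.Settled.step_eq {X : StratState I} (h : X.Settled S p) (x : HSym A) :
    (stratAutomaton g I).step X x = outerStep g I S p x := by
  match X, h with
  | .outer _ _, ⟨rfl, rfl⟩ => rfl
  | .inner t _ m, ⟨rfl, hexit⟩ =>
    have hex : (I t).IsExit m := ⟨p, hexit⟩
    show (if h : (I t).IsExit m then _ else _) = _
    rw [dif_pos hex, hex.choose_spec.unique hexit]

open Classical in
theorem evalFrom_inner {t : NontrivialTriple G E} (β : List (HSym A))
    (h : ∀ η, η <+: β → η.length < β.length → ¬ (I t).IsExit ((I t).M.eval η)) :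
    (stratAutomaton g I).evalFrom (.inner t S (I t).M.start) β =
      .inner t S ((I t).M.eval β) := by
  induction β using List.reverseRecOn with
  | nil => rfl
  | append_singleton β x ih =>
    have hβ : ¬ (I t).IsExit ((I t).M.eval β) := h β (List.prefix_append _ _) (by simp)
    rw [DFA.evalFrom_append_singleton, DFA.eval_append_singleton,
      ih fun η hη hlen => h η (hη.trans (List.prefix_append _ _)) (by simp; omega)]
    show (if h : (I t).IsExit _ then _ else _) = _
    rw [dif_neg hβ]

theorem finite_stratState [Finite A] [Finite G.Q] : Finite (StratState I) := by
  have : ∀ t, Finite (I t).State := fun t => @Finite.of_fintype _ (I t).fintype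
  refine Finite.of_injective (β := (Set G.Q × G.Q) ⊕ (Σ t, Set G.Q × (I t).State) ⊕ Unit)
    (fun
      | .outer S p => .inl (S, p)
      | .inner t S m => .inr (.inl ⟨t, S, m⟩)
      | .call => .inr (.inr ())) ?_
  rintro (_ | ⟨t, S, m⟩ | _) (_ | ⟨t', S', m'⟩ | _) h <;> simp at h
  · simp [h]
  · obtain ⟨rfl, h⟩ := h
    simp_all
  · rfl

end StrategyAutomaton

section Correctness

variable {A : Type} {G : CFGame A} {E : Set (G.Q × A × Set G.Q)} {g : Set G.Q → A → Set G.Q}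
  {I : ∀ t : NontrivialTriple G E, InducingAutomaton G t.1} {τ : RStrat A}

/-- After a call that enters the `t`-inducing automaton, Juliet's moves follow that automaton
until it exits, so the play of the call ends settled in the target state it reports. -/
theorem exists_play_inner {γ : List (HSym A)} {t : NontrivialTriple G E} {S : Set G.Q}
    (hγ : (stratAutomaton g I).eval γ = .inner t S (I t).M.start) {u : List A}
    (hu : G.R t.1.2.1 u) (hτ : G.RValid τ) (k d : ℕ) :
    ∃ n β, ((G.step (autoStrat (stratAutomaton g I)) τ)^[n] (γ, u.map (·, k), d)).1 = γ ++ β ∧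
      ((G.step (autoStrat (stratAutomaton g I)) τ)^[n] (γ, u.map (·, k), d)).2.1 = [] ∧
      ((stratAutomaton g I).eval (γ ++ β)).Settled S (G.T.evalFrom t.1.1 (flat β)) ∧
      G.T.evalFrom t.1.1 (flat β) ∈ t.1.2.2 := by
  obtain ⟨n, hfin, hexit, hnoexit⟩ := (I t).exists_play hu (hτ.subRStrat γ)
  set β := (G.play (autoStrat (I t).M) (subRStrat τ γ) u n).1
  have hinner : ∀ η, (∀ η', η' <+: η → η'.length < η.length → ¬ (I t).IsExit ((I t).M.eval η')) →
      (stratAutomaton g I).eval (γ ++ η) = .inner t S ((I t).M.eval η) := fun η hη => by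
    rw [DFA.eval, DFA.evalFrom_of_append, ← DFA.eval, hγ]
    exact evalFrom_inner η hη
  have hagree : ∀ β', β' <+: β → β'.length < β.length → ∀ a,
      autoStrat (I t).M β' a = subStrat (autoStrat (stratAutomaton g I)) γ β' a := by
    intro β' hβ' hlen a
    refine autoStrat_congr ?_
    rw [List.append_assoc, hinner]
    · exact Iff.rfl
    intro η' hη' hlen'
    rcases List.prefix_concat_iff.mp hη' with rfl | hη'
    · exact absurd hlen' (lt_irrefl _)
    · exact hnoexit η' (hη'.trans hβ') (hη'.length_le.trans_lt hlen)
  have hplay := play_congr hagree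
  obtain ⟨hhist, hrem⟩ :=
    iterate_step_shift (σ := autoStrat (stratAutomaton g I)) (τ := τ) γ u k d n
  rw [← hplay] at hhist hrem
  refine ⟨n, β, hhist, List.map_eq_nil_iff.mp (by rw [hrem, hfin]; rfl), ?_, hexit.1⟩
  rw [hinner β hnoexit]
  exact ⟨rfl, hexit⟩

variable (g I) in
def IsSettledHistory (S : Set G.Q) (α : List (HSym A)) : Prop :=
  ((stratAutomaton g I).eval α).Settled S (G.T.evalFrom G.T.start (flat α)) ∧
    G.T.evalFrom G.T.start (flat α) ∈ S

theorem IsSettledHistory.eval_append_singleton {S : Set G.Q} {α : List (HSym A)}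
    (hset : IsSettledHistory g I S α) (x : HSym A) :
    (stratAutomaton g I).eval (α ++ [x]) =
      outerStep g I S (G.T.evalFrom G.T.start (flat α)) x := by
  rw [DFA.eval_append_singleton]
  exact hset.1.step_eq x

theorem IsSettledHistory.append_inl {S : Set G.Q} {α : List (HSym A)} {c : A}
    (hset : IsSettledHistory g I S α) (hstep : G.NEStep E S c (g S c))
    (ht : chosenTriple E g S (G.T.evalFrom G.T.start (flat α)) c = none) :
    IsSettledHistory g I (g S c) (α ++ [Sum.inl c]) := by
  have hT : G.T.evalFrom G.T.start (flat (α ++ [Sum.inl c])) =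
      G.T.step (G.T.evalFrom G.T.start (flat α)) c := by
    rw [flat_append, DFA.evalFrom_of_append]
    rfl
  refine ⟨?_, ?_⟩ <;> rw [hT]
  · rw [hset.eval_append_singleton, outerStep, if_pos ht]
    exact ⟨rfl, rfl⟩
  · exact step_mem_of_chosenTriple_eq_none hstep hset.2 ht

theorem exists_settled_play_append_singleton {S : Set G.Q} {c : A}
    (hstep : G.NEStep E S c (g S c)) (hτ : G.RValid τ) {w : List A} {n : ℕ}
    (hfin : (G.play (autoStrat (stratAutomaton g I)) τ w n).2.1 = [])
    (hset : IsSettledHistory g I S (G.play (autoStrat (stratAutomaton g I)) τ w n).1) :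
    ∃ n', (G.play (autoStrat (stratAutomaton g I)) τ (w ++ [c]) n').2.1 = [] ∧
      IsSettledHistory g I (g S c)
        (G.play (autoStrat (stratAutomaton g I)) τ (w ++ [c]) n').1 := by
  set α := (G.play (autoStrat (stratAutomaton g I)) τ w n).1
  obtain ⟨n₀, hn₀⟩ := exists_play_append hfin [c]
  cases ht : chosenTriple E g S (G.T.evalFrom G.T.start (flat α)) c with
  | none =>
    have hread : ¬ (G.Fn c ∧ autoStrat (stratAutomaton g I) α c = JMove.call) := by
      rintro ⟨-, hcall⟩
      rw [autoStrat_eq_call_iff, hset.eval_append_singleton, outerStep, if_pos ht] at hcall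
      exact hcall
    refine ⟨n₀ + 1, ?_⟩
    rw [play_succ, hn₀, List.map_singleton, step_read hread]
    exact ⟨rfl, hset.append_inl hstep ht⟩
  | some t =>
    obtain ⟨hp, hc, hsub⟩ := eq_of_chosenTriple_eq_some ht
    have hfn : G.Fn c := hc ▸ (I t).inducing.2.1
    have hcall : G.Fn c ∧ autoStrat (stratAutomaton g I) α c = JMove.call := by
      refine ⟨hfn, ?_⟩
      rw [autoStrat_eq_call_iff, hset.eval_append_singleton, outerStep, if_neg (by simp [ht])]
      trivial
    have hγ : (stratAutomaton g I).eval (α ++ [Sum.inr c]) = .inner t (g S c) (I t).M.start := by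
      rw [hset.eval_append_singleton]
      simp only [outerStep, ht]
    have hu : G.R t.1.2.1 (τ α c) := by
      rw [hc]
      exact hτ α c hfn
    obtain ⟨n₁, β, hhist, hrem, hsettled, hmem⟩ :=
      exists_play_inner hγ hu hτ 1 (max (G.play (autoStrat (stratAutomaton g I)) τ w n).2.2 1)
    refine ⟨n₀ + 1 + n₁, ?_⟩
    rw [play_add, play_succ, hn₀, List.map_singleton, step_call hcall, List.append_nil]
    have hT : G.T.evalFrom G.T.start (flat (α ++ [Sum.inr c] ++ β)) =
        G.T.evalFrom t.1.1 (flat β) := by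
      rw [List.append_assoc, flat_append, DFA.evalFrom_of_append, hp]
      rfl
    refine ⟨hrem, ?_, ?_⟩ <;> rw [hhist, hT]
    exacts [hsettled, hsub hmem]

theorem exists_settled_play
    (hg : IsOnlineStrat (G.NEStep E) {G.T.start} (fun w => w.foldl g {G.T.start}))
    (hτ : G.RValid τ) (w : List A) :
    ∃ n, (G.play (autoStrat (stratAutomaton g I)) τ w n).2.1 = [] ∧
      IsSettledHistory g I (w.foldl g {G.T.start})
        (G.play (autoStrat (stratAutomaton g I)) τ w n).1 := by
  induction w using List.reverseRecOn with
  | nil => exact ⟨0, rfl, ⟨rfl, rfl⟩, rfl⟩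
  | append_singleton w c ih =>
    obtain ⟨n, hfin, hset⟩ := ih
    rw [List.foldl_append, List.foldl_cons, List.foldl_nil]
    exact exists_settled_play_append_singleton (by simpa using hg.2 w c) hτ hfin hset

theorem preimage_foldl_subset_W
    (hg : IsOnlineStrat (G.NEStep E) {G.T.start} (fun w => w.foldl g {G.T.start})) :
    (fun w => w.foldl g {G.T.start}) ⁻¹' {S | S ⊆ G.T.accept} ⊆
      G.W (autoStrat (stratAutomaton g I)) := by
  intro w hw τ hτ
  obtain ⟨n, hfin, -, hmem⟩ := exists_settled_play hg hτ w
  exact ⟨n, hfin, hw hmem⟩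

end Correctness

theorem statement10_general {A : Type} [Fintype A] [LinearOrder A] (G : CFGame A)
    (E : Set (G.Q × A × Set G.Q))
    (hind : ∀ t ∈ E, ¬ G.TrivialTriple t →
      ∃ (S : Type) (_ : Fintype S) (M : DFA (HSym A) S), G.Inducing M t.1 t.2.1 t.2.2) :
    ∃ (S : Type) (_ : Fintype S) (M : DFA (HSym A) S),
      ∀ ρ : List A → Set G.Q, G.NEOnlineStrat E ρ →
        slLE (G.NEWins ρ) (G.W (autoStrat M)) := by
  have := G.fintypeQ
  choose S hS M hM using fun t : NontrivialTriple G E => hind t.1 t.2.1 t.2.2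
  let I : ∀ t : NontrivialTriple G E, InducingAutomaton G t.1 := fun t => ⟨S t, hS t, M t, hM t⟩
  obtain ⟨g, hg⟩ := exists_optimal_positional_strat (G.NEStep E) {S | S ⊆ G.T.accept}
    {G.T.start}
  have := finite_stratState (I := I)
  refine ⟨StratState I, Fintype.ofFinite _, stratAutomaton g I, fun ρ hρ => ?_⟩
  obtain ⟨hgρ, hle⟩ := hg ρ hρ
  exact slLE_of_slLE_of_subset hle (preimage_foldl_subset_W hgρ)

theorem statement10 {A : Type} [Fintype A] [LinearOrder A] (G : CFGame A)
    (hpf : G.PrefixFree) (E : Set (G.Q × A × Set G.Q))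
    (hind : ∀ t ∈ E, ¬ G.TrivialTriple t →
      ∃ (S : Type) (_ : Fintype S) (M : DFA (HSym A) S), G.Inducing M t.1 t.2.1 t.2.2) :
    ∃ (S : Type) (_ : Fintype S) (M : DFA (HSym A) S),
      ∀ ρ : List A → Set G.Q, G.NEOnlineStrat E ρ →
        slLE (G.NEWins ρ) (G.W (autoStrat M)) :=
  statement10_general G E hind

end CFG
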